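/- arXiv:2110.04805 — 7 statements merged into one kernel-verified Lean document; each statement's English description precedes it below -/
import Mathlib

section
/- For all non-negative integers n and l, the super Catalan number S(n,l) = (2n)!(2l)!/(n!·l!·(n+l)!) is an integer. -/
/-!
Viewed as rational numbers, `S(n, 0) = C(2n, n)` and `4 S(n, l) = S(n + 1, l) + S(n, l + 1)`.
Solving the recurrence for `S(n, l + 1)`, induction on `l` (for all `n` at once) shows that
every `S(n, l)` is an integer.
-/

open Nat

def superCatalanRat (n l : ℕ) : ℚ :=
  ((2 * n)! * (2 * l)! : ℚ) / (n ! * l ! * (n + l)!)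

theorem superCatalanRat_zero_right (n : ℕ) : superCatalanRat n 0 = (2 * n).choose n := by
  rw [superCatalanRat, Nat.cast_choose ℚ (by omega : n ≤ 2 * n), show 2 * n - n = n by omega]
  simp

theorem superCatalanRat_recurrence (n l : ℕ) :
    4 * superCatalanRat n l = superCatalanRat (n + 1) l + superCatalanRat n (l + 1) := by
  simp only [superCatalanRat, show 2 * (n + 1) = 2 * n + 1 + 1 by ring,
    show 2 * (l + 1) = 2 * l + 1 + 1 by ring, show n + 1 + l = n + l + 1 by ring,
    ← add_assoc, Nat.factorial_succ]
  push_cast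
  field_simp
  ring

theorem exists_int_superCatalanRat (n l : ℕ) : ∃ k : ℤ, superCatalanRat n l = k := by
  induction l generalizing n with
  | zero => exact ⟨(2 * n).choose n, by simp [superCatalanRat_zero_right]⟩
  | succ l ih =>
    obtain ⟨a, ha⟩ := ih n
    obtain ⟨b, hb⟩ := ih (n + 1)
    refine ⟨4 * a - b, ?_⟩
    rw [eq_sub_of_add_eq' (superCatalanRat_recurrence n l).symm, ha, hb]
    push_cast; ring

/-- S(n,l) = (2n)!(2l)!/(n!·l!·(n+l)!) is an integer, i.e. the denominator
divides the numerator. -/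
theorem superCatalan_integer (n l : ℕ) :
    (n.factorial * l.factorial * (n + l).factorial) ∣
      ((2 * n).factorial * (2 * l).factorial) := by
  obtain ⟨k, hk⟩ := exists_int_superCatalanRat n l
  have hD : (n ! * l ! * (n + l)! : ℚ) ≠ 0 := by positivity
  rw [superCatalanRat, div_eq_iff hD] at hk
  refine Int.natCast_dvd_natCast.mp ⟨k, ?_⟩
  exact_mod_cast hk.trans (mul_comm _ _)
end

section
/- For all non-negative integers n and l with not both zero, the super Catalan number S(n,l) = (2n)!(2l)!/(n!·l!·(n+l)!) is an even integer. -/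
/-!
Write `S(n,l) = N(n,l) / D(n,l)` with `N(n,l) = (2n)!(2l)!` and `D(n,l) = n! l! (n+l)!`.
The factorial identity behind the recurrence `S(n,l+1) = 4 S(n,l) - S(n+1,l)` shows that
`k D(n,l+1) ∣ N(n,l+1)` as soon as `k D(n,l) ∣ 4 N(n,l)` and `k D(n+1,l) ∣ N(n+1,l)`.
Induction on `l` with `k = 1` gives integrality, and then with `k = 2` evenness, starting from
`S(n,0)`, the central binomial coefficient, which is even for `n ≥ 1`.
-/

open Nat

def superCatalanNum (n l : ℕ) : ℕ := (2 * n)! * (2 * l)!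

def superCatalanDen (n l : ℕ) : ℕ := n ! * l ! * (n + l)!

lemma superCatalanNum_recurrence (n l : ℕ) :
    (n + 1) * superCatalanNum n (l + 1) + (l + 1) * superCatalanNum (n + 1) l =
      4 * ((n + 1) * (l + 1) * (n + l + 1)) * superCatalanNum n l := by
  have h2n : 2 * (n + 1) = (2 * n + 1) + 1 := by ring
  have h2l : 2 * (l + 1) = (2 * l + 1) + 1 := by ring
  simp only [superCatalanNum, h2n, h2l, factorial_succ]
  ring

lemma superCatalanDen_succ_right (n l : ℕ) :
    superCatalanDen n (l + 1) = (l + 1) * (n + l + 1) * superCatalanDen n l := by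
  simp only [superCatalanDen, ← add_assoc, factorial_succ]
  ring

lemma superCatalanDen_succ_left (n l : ℕ) :
    superCatalanDen (n + 1) l = (n + 1) * (n + l + 1) * superCatalanDen n l := by
  simp only [superCatalanDen, add_right_comm n 1 l, factorial_succ]
  ring

lemma mul_superCatalanDen_dvd_num_succ_right {k n l : ℕ}
    (h₁ : k * superCatalanDen n l ∣ 4 * superCatalanNum n l)
    (h₂ : k * superCatalanDen (n + 1) l ∣ superCatalanNum (n + 1) l) :
    k * superCatalanDen n (l + 1) ∣ superCatalanNum n (l + 1) := by
  have hden : (n + 1) * (k * superCatalanDen n (l + 1)) =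
      (l + 1) * (k * superCatalanDen (n + 1) l) := by
    rw [superCatalanDen_succ_left, superCatalanDen_succ_right]
    ring
  have hsum : (n + 1) * (k * superCatalanDen n (l + 1)) ∣
      (n + 1) * superCatalanNum n (l + 1) + (l + 1) * superCatalanNum (n + 1) l := by
    rw [superCatalanNum_recurrence, superCatalanDen_succ_right]
    calc (n + 1) * (k * ((l + 1) * (n + l + 1) * superCatalanDen n l))
        = (n + 1) * (l + 1) * (n + l + 1) * (k * superCatalanDen n l) := by ring
      _ ∣ (n + 1) * (l + 1) * (n + l + 1) * (4 * superCatalanNum n l) := mul_dvd_mul_left _ h₁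
      _ = 4 * ((n + 1) * (l + 1) * (n + l + 1)) * superCatalanNum n l := by ring
  have hsecond : (n + 1) * (k * superCatalanDen n (l + 1)) ∣
      (l + 1) * superCatalanNum (n + 1) l := hden ▸ mul_dvd_mul_left _ h₂
  exact Nat.dvd_of_mul_dvd_mul_left n.succ_pos ((Nat.dvd_add_left hsecond).mp hsum)

lemma centralBinom_mul_superCatalanDen_zero (n : ℕ) :
    centralBinom n * superCatalanDen n 0 = superCatalanNum n 0 := by
  simp only [superCatalanDen, superCatalanNum, centralBinom_eq_two_mul_choose, two_mul,
    ← add_choose_mul_factorial_mul_factorial n n]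
  simp [mul_assoc]

lemma superCatalanDen_dvd_num (n l : ℕ) : superCatalanDen n l ∣ superCatalanNum n l := by
  induction l generalizing n with
  | zero => exact Dvd.intro_left _ (centralBinom_mul_superCatalanDen_zero n)
  | succ l ih =>
    simpa using mul_superCatalanDen_dvd_num_succ_right (k := 1)
      (by simpa using dvd_mul_of_dvd_right (ih n) 4) (by simpa using ih (n + 1))

/-- For n, l not both zero, S(n,l) = (2n)!(2l)!/(n!·l!·(n+l)!) is an even
integer: twice the denominator divides the numerator. -/
theorem superCatalan_even (n l : ℕ) (h : ¬(n = 0 ∧ l = 0)) :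
    (2 * (n.factorial * l.factorial * (n + l).factorial)) ∣
      ((2 * n).factorial * (2 * l).factorial) := by
  change 2 * superCatalanDen n l ∣ superCatalanNum n l
  induction l generalizing n with
  | zero =>
    rw [← centralBinom_mul_superCatalanDen_zero]
    exact mul_dvd_mul_right (two_dvd_centralBinom_of_one_le (by omega)) _
  | succ l ih =>
    have h4 : 2 * superCatalanDen n l ∣ 4 * superCatalanNum n l :=
      mul_dvd_mul (by norm_num) (superCatalanDen_dvd_num n l)
    exact mul_superCatalanDen_dvd_num_succ_right h4 (ih (n + 1) (by omega))
end

section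
/- For all non-negative integers n, ∑_{k=0}^{2n} (-1)^k · C(2n,k) · C(2k,k) · C(4n-2k,2n-k) = C(2n,n)^2. -/
/-!
The left side is the coefficient of `x^(2n) y^(2n)` in `(x (1+y)^2 - y (1+x)^2)^(2n)`: in the
binomial expansion, the `k`-th term `(-y (1+x)^2)^k (x (1+y)^2)^(2n-k)` contributes `C(2k,k)` from
`(1+x)^(2k)` and `C(4n-2k,2n-k)` from `(1+y)^(4n-2k)`. But `x (1+y)^2 - y (1+x)^2 = (x-y)(1-xy)`,
and since `(x-y)^(2n)` is homogeneous of degree `2n`, the monomial `x^(2n) y^(2n)` of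
`(x-y)^(2n) (1-xy)^(2n)` only arises from `x^n y^n` times `(xy)^n`, whose coefficients are
`(-1)^n C(2n,n)` each.

Bivariate polynomials are `R[X][X]` with `x = C X` and `y = X`, so the coefficient of `x^i y^j`
in `F` is `(F.coeff j).coeff i`.
-/

open Polynomial Finset

namespace Polynomial

variable {R : Type*}

theorem coeff_coeff_C_mul_map_C [Semiring R] (p q : R[X]) (i j : ℕ) :
    ((C p * q.map C).coeff j).coeff i = p.coeff i * q.coeff j := by
  rw [coeff_C_mul, coeff_map, coeff_mul_C]

theorem coeff_X_pow_mul_one_add_X_pow [Semiring R] {a d : ℕ} (m : ℕ) (h : a ≤ d) :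
    ((X : R[X]) ^ a * (1 + X) ^ m).coeff d = (m.choose (d - a) : R) := by
  rw [coeff_X_pow_mul', if_pos h, coeff_one_add_X_pow]

theorem coeff_C_add_C_mul_X_pow [CommSemiring R] (u v : R) (m k : ℕ) :
    ((C u + C v * X) ^ m).coeff k = u ^ (m - k) * v ^ k * m.choose k := by
  have : (C u + C v * X) ^ m = ((X + C u) ^ m).comp (C v * X) := by
    rw [pow_comp, add_comp, X_comp, C_comp, add_comm]
  rw [this, comp_C_mul_X_coeff, coeff_X_add_C_pow]
  ring

theorem coeff_coeff_pow_sub_eq_sum_choose [CommRing R] (m : ℕ) :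
    (((C X * (1 + X) ^ 2 - X * C ((1 + X) ^ 2) : R[X][X]) ^ m).coeff m).coeff m =
      ∑ k ∈ range (m + 1), (-1) ^ k * (m.choose k : R) * (2 * k).choose k *
        (2 * (m - k)).choose (m - k) := by
  rw [sub_eq_neg_add, add_pow, finsetSum_coeff, finsetSum_coeff]
  refine sum_congr rfl fun k hk => ?_
  have hk : k ≤ m := Nat.lt_succ_iff.mp (mem_range.mp hk)
  have separated : (-(X * C ((1 + X) ^ 2)) : R[X][X]) ^ k * (C X * (1 + X) ^ 2) ^ (m - k) *
        (m.choose k : R[X][X]) =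
      C (C ((-1) ^ k * (m.choose k : R)) * (X ^ (m - k) * (1 + X) ^ (2 * k))) *
        (X ^ k * (1 + X) ^ (2 * (m - k)) : R[X]).map C := by
    simp only [Polynomial.map_mul, Polynomial.map_pow, Polynomial.map_add, map_X,
      Polynomial.map_one, map_mul, map_pow, map_add, map_one, map_natCast, map_neg, mul_pow,
      ← pow_mul]
    rw [neg_pow (X * (1 + C X) ^ 2 : R[X][X]), mul_pow, ← pow_mul]
    ring
  rw [separated, coeff_coeff_C_mul_map_C, coeff_C_mul,
    coeff_X_pow_mul_one_add_X_pow _ (Nat.sub_le m k), coeff_X_pow_mul_one_add_X_pow _ hk,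
    Nat.sub_sub_self hk]

theorem coeff_coeff_two_mul_pow_sub_mul_one_sub [CommRing R] (n : ℕ) :
    ((((C X - X) * (1 - C X * X) : R[X][X]) ^ (2 * n)).coeff (2 * n)).coeff (2 * n) =
      ((2 * n).choose n : R) ^ 2 := by
  have hsub : (C X - X : R[X][X]) = C X + C (-1) * X := by rw [C_neg, C_1]; ring
  have hone : (1 - C X * X : R[X][X]) = C 1 + C (-X) * X := by rw [C_neg, C_1]; ring
  rw [hsub, hone, mul_pow, coeff_mul, Nat.sum_antidiagonal_eq_sum_range_succ_mk, finsetSum_coeff]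
  have summand : ∀ i ∈ range (2 * n + 1),
      (((C X + C (-1) * X) ^ (2 * n)).coeff i *
        ((C 1 + C (-X) * X) ^ (2 * n)).coeff (2 * n - i)).coeff (2 * n) =
      if i = n then ((2 * n).choose n : R) ^ 2 else 0 := by
    intro i hi
    have hi : i ≤ 2 * n := Nat.lt_succ_iff.mp (mem_range.mp hi)
    have sign : (-1 : R[X]) ^ i * (-1) ^ (2 * n - i) = 1 := by
      rw [← pow_add, Nat.add_sub_cancel' hi, pow_mul, neg_one_sq, one_pow]
    set c : ℕ := (2 * n).choose i * (2 * n).choose (2 * n - i) with hc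
    calc _ = (C (c : R) * X ^ (2 * (2 * n - i))).coeff (2 * n) := by
          rw [coeff_C_add_C_mul_X_pow, coeff_C_add_C_mul_X_pow, neg_pow (X : R[X]), one_pow]
          congr 1
          simp only [hc, Nat.cast_mul, map_mul, map_natCast]
          linear_combination (X ^ (2 * n - i) * X ^ (2 * n - i) *
            ((2 * n).choose i * (2 * n).choose (2 * n - i) : R[X])) * sign
      _ = _ := by
          rw [coeff_C_mul_X_pow]
          by_cases h : i = n
          · rw [if_pos (by omega), if_pos h, hc, h, show 2 * n - n = n by omega, Nat.cast_mul, sq]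
          · rw [if_neg (by omega), if_neg h]
  rw [sum_congr rfl summand, sum_ite_eq', if_pos (mem_range.mpr (by omega))]

end Polynomial

/-- ∑_{k=0}^{2n} (-1)^k C(2n,k) C(2k,k) C(4n-2k,2n-k) = C(2n,n)^2. -/
theorem alternating_central_binomial (n : ℕ) :
    ∑ k ∈ Finset.range (2 * n + 1),
        (-1 : ℤ) ^ k * ((2 * n).choose k : ℤ) * ((2 * k).choose k : ℤ) *
          ((4 * n - 2 * k).choose (2 * n - k) : ℤ)
      = ((2 * n).choose n : ℤ) ^ 2 := by
  have factor : (C X * (1 + X) ^ 2 - X * C ((1 + X) ^ 2) : ℤ[X][X]) =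
      (C X - X) * (1 - C X * X) := by
    simp only [map_pow, map_add, map_one]
    ring
  calc _ = ∑ k ∈ range (2 * n + 1), (-1) ^ k * ((2 * n).choose k : ℤ) * (2 * k).choose k *
        (2 * (2 * n - k)).choose (2 * n - k) :=
        sum_congr rfl fun k _ => by rw [show 4 * n - 2 * k = 2 * (2 * n - k) by omega]
    _ = _ := by
        rw [← coeff_coeff_pow_sub_eq_sum_choose, factor, coeff_coeff_two_mul_pow_sub_mul_one_sub]
end

section
/- For all non-negative integers n, ∑_{k=0}^{2n} (-1)^k · C(2n,k) · Cat(k) · Cat(2n-k) = Cat(n) · C(2n,n), where Cat(m) = C(2m,m)/(m+1) is the m-th Catalan number. -/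
/-!
Creative telescoping. Put `t k m = (-1)^k C(k+m,k) Cat k Cat m` and `T s = ∑_{k+m=s} t k m`, so
that the left-hand side is `T (2n)`. Zeilberger's algorithm produces a certificate `g` with
`(s+2)(s+3)²((s+2)(s+4) t k (m+2) - 16(s+1)² t k m) = g (k+1) m - g k (m+1)` for `s = k + m`;
summing over the antidiagonal `k + m = s` telescopes, and the two boundary terms of `T (s+2)` cancel
against `g (s+1) 0`, giving `(s+2)(s+4) T(s+2) = 16(s+1)² T s`. For `s = 2n` this is the recurrence
`(n+1)(n+2) R(n+1) = 4(2n+1)² R n` that `R n = Cat n C(2n,n)` satisfies, and `T 0 = R 0 = 1`.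
-/

open Nat Finset

theorem Nat.succ_succ_mul_catalan_succ (n : ℕ) :
    (n + 2) * catalan (n + 1) = 2 * (2 * n + 1) * catalan n := by
  refine Nat.eq_of_mul_eq_mul_left n.succ_pos ?_
  calc (n + 1) * ((n + 2) * catalan (n + 1))
      = (n + 1) * centralBinom (n + 1) := by rw [← succ_mul_catalan_eq_centralBinom]
    _ = 2 * (2 * n + 1) * ((n + 1) * catalan n) := by
      rw [succ_mul_centralBinom_succ, succ_mul_catalan_eq_centralBinom]
    _ = (n + 1) * (2 * (2 * n + 1) * catalan n) := by ring

section CastRatios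

variable {K : Type*} [Field K] [CharZero K]

theorem Nat.cast_catalan_succ (n : ℕ) :
    (catalan (n + 1) : K) = 2 * (2 * n + 1) / (n + 2) * catalan n := by
  rw [div_mul_eq_mul_div, eq_div_iff (by norm_cast), mul_comm]
  exact_mod_cast succ_succ_mul_catalan_succ n

theorem Nat.cast_choose_add_succ (k m : ℕ) :
    ((k + (m + 1)).choose k : K) = (k + m + 1) / (m + 1) * (k + m).choose k := by
  have h := choose_mul_succ_eq (k + m) k
  rw [show k + m + 1 - k = m + 1 by omega] at h
  rw [div_mul_eq_mul_div, eq_div_iff (by norm_cast), ← add_assoc]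
  exact_mod_cast h.symm.trans (mul_comm _ _)

theorem Nat.cast_succ_add_choose_succ (k m : ℕ) :
    ((k + 1 + m).choose (k + 1) : K) = (k + m + 1) / (k + 1) * (k + m).choose k := by
  rw [div_mul_eq_mul_div, eq_div_iff (by norm_cast), add_right_comm]
  exact_mod_cast (add_one_mul_choose_eq (k + m) k).symm

end CastRatios

theorem Finset.Nat.sum_antidiagonal_telescope {M : Type*} [AddCommGroup M] (f : ℕ → ℕ → M)
    (s : ℕ) :
    ∑ p ∈ antidiagonal s, (f (p.1 + 1) p.2 - f p.1 (p.2 + 1)) = f (s + 1) 0 - f 0 (s + 1) := by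
  have h₁ := Finset.Nat.sum_antidiagonal_succ (n := s) (f := fun p => f p.1 p.2)
  have h₂ := Finset.Nat.sum_antidiagonal_succ' (n := s) (f := fun p => f p.1 p.2)
  rw [sum_sub_distrib, eq_sub_of_add_eq' h₁.symm, eq_sub_of_add_eq' h₂.symm]
  abel

def altCatalanTerm (k m : ℕ) : ℤ := (-1) ^ k * (k + m).choose k * catalan k * catalan m

/-- Zeilberger certificate for `altCatalanTerm`; the telescoping identity it satisfies is an
identity of rational functions in `k` and `m`, so it holds for all `k, m`, not only `k + m` even. -/
def altCatalanCert (k j : ℕ) : ℤ :=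
  (-1) ^ k * k * (k + 1) * (k + j + 2).choose k * catalan k * catalan j *
    (-4 * (k + j) * k ^ 2 + 4 * (k + j) * (3 * (k + j) + 4) * k
      - 2 * (k + j + 1) * (4 * (k + j) ^ 2 + 5 * (k + j) - 3))

theorem altCatalanTerm_telescope (k m : ℕ) :
    (k + m + 2 : ℤ) * (k + m + 3) ^ 2 * ((k + m + 2) * (k + m + 4) * altCatalanTerm k (m + 2)
      - 16 * (k + m + 1) ^ 2 * altCatalanTerm k m)
    = altCatalanCert (k + 1) m - altCatalanCert k (m + 1) := by
  unfold altCatalanTerm altCatalanCert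
  rw [show k + (m + 1) + 2 = k + (m + 3) by ring, show k + 1 + m + 2 = k + 1 + (m + 2) by ring]
  qify
  rw [cast_succ_add_choose_succ, cast_choose_add_succ k (m + 2), cast_choose_add_succ k (m + 1),
    cast_choose_add_succ k m, cast_catalan_succ (m + 1), cast_catalan_succ m, cast_catalan_succ k]
  field_simp
  push_cast
  ring

theorem altCatalanCert_boundary (N : ℕ) :
    altCatalanCert N 0
      + (N + 1) ^ 2 * (N + 2) ^ 2 * (N + 3) * (altCatalanTerm N 1 + altCatalanTerm (N + 1) 0)
      = 0 := by
  unfold altCatalanTerm altCatalanCert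
  rw [show N + 0 + 2 = N + (1 + 1) by ring, add_zero, choose_self, catalan_zero, catalan_one]
  qify
  rw [cast_choose_add_succ N 1, add_zero, choose_succ_self_right, cast_catalan_succ N]
  push_cast
  field_simp
  ring

def altCatalanConv (s : ℕ) : ℤ := ∑ p ∈ antidiagonal s, altCatalanTerm p.1 p.2

theorem altCatalanConv_add_two (s : ℕ) :
    (s + 2 : ℤ) * (s + 4) * altCatalanConv (s + 2) = 16 * (s + 1) ^ 2 * altCatalanConv s := by
  set shifted := ∑ p ∈ antidiagonal s, altCatalanTerm p.1 (p.2 + 2)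
  have hsplit : altCatalanConv (s + 2)
      = altCatalanTerm (s + 2) 0 + altCatalanTerm (s + 1) 1 + shifted := by
    rw [altCatalanConv, Finset.Nat.sum_antidiagonal_succ', Finset.Nat.sum_antidiagonal_succ']
    exact (add_assoc _ _ _).symm
  have htel : (s + 2 : ℤ) * (s + 3) ^ 2
      * ((s + 2) * (s + 4) * shifted - 16 * (s + 1) ^ 2 * altCatalanConv s)
      = altCatalanCert (s + 1) 0 := by
    calc _ = ∑ p ∈ antidiagonal s,
          (altCatalanCert (p.1 + 1) p.2 - altCatalanCert p.1 (p.2 + 1)) := by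
          rw [altCatalanConv, mul_sum, mul_sum, ← sum_sub_distrib, mul_sum]
          refine sum_congr rfl fun p hp => ?_
          rw [← mem_antidiagonal.mp hp, ← altCatalanTerm_telescope]
          push_cast
          ring
      _ = _ := by
        rw [Finset.Nat.sum_antidiagonal_telescope altCatalanCert, sub_eq_self]
        simp [altCatalanCert]
  have hbd := altCatalanCert_boundary (s + 1)
  push_cast at hbd
  have hD : (s + 2 : ℤ) * (s + 3) ^ 2 ≠ 0 := by positivity
  apply mul_left_cancel₀ hD
  linear_combination (s + 2 : ℤ) * (s + 3) ^ 2 * (s + 2) * (s + 4) * hsplit + htel + hbd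

theorem Nat.catalan_mul_centralBinom_succ (n : ℕ) :
    (n + 1) * (n + 2) * (catalan (n + 1) * centralBinom (n + 1))
      = 4 * (2 * n + 1) ^ 2 * (catalan n * centralBinom n) := by
  calc _ = (n + 2) * catalan (n + 1) * ((n + 1) * centralBinom (n + 1)) := by ring
    _ = _ := by rw [succ_succ_mul_catalan_succ, succ_mul_centralBinom_succ]; ring

theorem altCatalanConv_two_mul (n : ℕ) :
    altCatalanConv (2 * n) = catalan n * centralBinom n := by
  induction n with
  | zero => simp [altCatalanConv, altCatalanTerm]
  | succ n ih =>
    have hconv := altCatalanConv_add_two (2 * n)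
    have hcb : ((n + 1) * (n + 2) * (catalan (n + 1) * centralBinom (n + 1)) : ℤ)
        = 4 * (2 * n + 1) ^ 2 * (catalan n * centralBinom n) := by
      exact_mod_cast catalan_mul_centralBinom_succ n
    rw [mul_add_one]
    push_cast at hconv
    refine mul_left_cancel₀ (by positivity : (2 * n + 2 : ℤ) * (2 * n + 4) ≠ 0) ?_
    linear_combination hconv + 16 * (2 * n + 1 : ℤ) ^ 2 * ih - 4 * hcb

/-- ∑_{k=0}^{2n} (-1)^k C(2n,k) Cat(k) Cat(2n-k) = Cat(n) C(2n,n). -/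
theorem alternating_catalan_convolution (n : ℕ) :
    ∑ k ∈ Finset.range (2 * n + 1),
        (-1 : ℤ) ^ k * ((2 * n).choose k : ℤ) * (catalan k : ℤ) *
          (catalan (2 * n - k) : ℤ)
      = (catalan n : ℤ) * ((2 * n).choose n : ℤ) := by
  rw [← centralBinom_eq_two_mul_choose, ← altCatalanConv_two_mul, altCatalanConv,
    Finset.Nat.sum_antidiagonal_eq_sum_range_succ (fun k m => altCatalanTerm k m)]
  refine sum_congr rfl fun k hk => ?_
  rw [altCatalanTerm, Nat.add_sub_cancel' (by grind)]
end

section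
/- For any odd positive integer N (say N = 2n-1), any non-negative integers l, t, m with t ≤ n-1, the sum ∑_{k=t}^{N-t} (-1)^k · C(N-2t, k-t) · S(k,l) · S(N-k,l) equals 0. -/
/-!
For odd `N` the reflection `k ↦ N - k` maps the range `t ≤ k ≤ N - t` to itself without fixed
points, fixes the binomial coefficient `C(N - 2t, k - t)` and the product `S(k,l) S(N-k,l)`, and
flips the sign `(-1)^k`. So the terms cancel in pairs; nothing about `S` beyond being a function
of `k` is needed.
-/

/-- The super Catalan number, an integer (the division is exact). -/
def superCatalan (n l : ℕ) : ℕ :=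
  ((2 * n).factorial * (2 * l).factorial) /
    (n.factorial * l.factorial * (n + l).factorial)

open Finset

theorem Finset.sum_Icc_eq_zero_of_reflect_neg {M : Type*} [AddCommGroup M] {N : ℕ} (hN : Odd N)
    (a : ℕ) (g : ℕ → M) (hg : ∀ k ∈ Icc a (N - a), g (N - k) = -g k) :
    ∑ k ∈ Icc a (N - a), g k = 0 := by
  obtain ⟨j, rfl⟩ := hN
  refine sum_involution (fun k _ => 2 * j + 1 - k) (fun k hk => by rw [hg k hk, add_neg_cancel])
    (fun k hk _ => ?_) (fun k hk => ?_) (fun k hk => ?_) <;> simp only [mem_Icc] at hk ⊢ <;> omega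

theorem neg_one_pow_sub_of_odd {R : Type*} [Ring R] {N k : ℕ} (hN : Odd N) (hk : k ≤ N) :
    (-1 : R) ^ (N - k) = -(-1) ^ k :=
  calc (-1 : R) ^ (N - k) = (-1) ^ (N - k) * ((-1) ^ k * (-1) ^ k) := by
        rw [← pow_add, ← two_mul, pow_mul, neg_one_sq, one_pow, mul_one]
    _ = (-1) ^ N * (-1) ^ k := by rw [← mul_assoc, ← pow_add, Nat.sub_add_cancel hk]
    _ = -(-1) ^ k := by rw [hN.neg_one_pow, neg_one_mul]

theorem sum_Icc_neg_one_pow_mul_choose_mul_reflect_eq_zero {R : Type*} [CommRing R] {N : ℕ}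
    (hN : Odd N) (t : ℕ) (f : ℕ → R) :
    ∑ k ∈ Icc t (N - t), (-1 : R) ^ k * ((N - 2 * t).choose (k - t) : R) * f k * f (N - k) = 0 := by
  refine sum_Icc_eq_zero_of_reflect_neg hN t _ fun k hk => ?_
  rw [mem_Icc] at hk
  have hchoose : (N - 2 * t).choose (N - k - t) = (N - 2 * t).choose (k - t) :=
    Nat.choose_symm_of_eq_add (by omega)
  rw [neg_one_pow_sub_of_odd hN (by omega), Nat.sub_sub_self (by omega), hchoose]
  ring

theorem alternating_convolution_odd_general (n l t : ℕ) (hn : 1 ≤ n) :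
    ∑ k ∈ Finset.Icc t (2 * n - 1 - t),
        (-1 : ℤ) ^ k * ((2 * n - 1 - 2 * t).choose (k - t) : ℤ) *
          (superCatalan k l : ℤ) * (superCatalan (2 * n - 1 - k) l : ℤ)
      = 0 :=
  sum_Icc_neg_one_pow_mul_choose_mul_reflect_eq_zero ⟨n - 1, by omega⟩ t
    (fun k => (superCatalan k l : ℤ))

/-- For odd N = 2n-1 the alternating shifted convolution vanishes. -/
theorem alternating_convolution_odd (n l t m : ℕ) (hn : 1 ≤ n) (ht : t ≤ n - 1) :
    ∑ k ∈ Finset.Icc t (2 * n - 1 - t),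
        (-1 : ℤ) ^ k * ((2 * n - 1 - 2 * t).choose (k - t) : ℤ) *
          (superCatalan k l : ℤ) * (superCatalan (2 * n - 1 - k) l : ℤ)
      = 0 :=
  alternating_convolution_odd_general n l t hn
end

section
/- For all non-negative integers n, l, t: ∑_{k=t}^{2n-t} (-1)^k · (2l+1)/(k+l+1) · C(2n-2t, k-t) · S(k,l) · S(2n-k,l) = ((n+l+1)/(4(2l+1))) · ∑_{k=t}^{2n-t} (-1)^k · C(2n-2t, k-t) · S(k,l+1) · S(2n-k,l+1). -/
/-- The super Catalan number S(n,l) = (2n)!(2l)!/(n!·l!·(n+l)!) as a rational. -/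
def S (n l : ℕ) : ℚ :=
  (((2 * n).factorial : ℚ) * ((2 * l).factorial : ℚ)) /
    ((n.factorial : ℚ) * (l.factorial : ℚ) * ((n + l).factorial : ℚ))

/-!
Raising `l` multiplies `S k l` by `2(2l+1)/(k+l+1)`, so for `x + y = 2n` the product
`S x (l+1) * S y (l+1)` is `S x l * S y l` times `4(2l+1)² / ((x+l+1)(y+l+1))`, and by partial
fractions `(n+l+1)/(4(2l+1))` times that factor is the mean of `(2l+1)/(x+l+1)` and
`(2l+1)/(y+l+1)`. The rest of the summand is invariant under `k ↦ 2n - k`, so reflecting the sum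
turns the second half of the mean into the first.
-/

theorem S_succ_right (k l : ℕ) : S k (l + 1) = 2 * (2 * l + 1) / (k + l + 1) * S k l := by
  unfold S
  rw [show 2 * (l + 1) = 2 * l + 1 + 1 by ring, show k + (l + 1) = k + l + 1 by ring,
    Nat.factorial_succ (2 * l + 1), Nat.factorial_succ (2 * l), Nat.factorial_succ l,
    Nat.factorial_succ (k + l)]
  push_cast
  field_simp
  ring

theorem Finset.sum_Icc_reflect {M : Type*} [AddCommMonoid M] (f : ℕ → M) (N t : ℕ) :
    ∑ k ∈ Icc t (N - t), f (N - k) = ∑ k ∈ Icc t (N - t), f k :=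
  sum_nbij' (N - ·) (N - ·) (by simp only [mem_Icc]; omega) (by simp only [mem_Icc]; omega)
    (by simp only [mem_Icc]; omega) (by simp only [mem_Icc]; omega) (fun _ _ => rfl)

theorem neg_one_pow_two_mul_sub {R : Type*} [Monoid R] [HasDistribNeg R] {n k : ℕ}
    (hk : k ≤ 2 * n) : (-1 : R) ^ (2 * n - k) = (-1) ^ k :=
  neg_one_pow_congr (by simp [Nat.even_sub hk])

def psiTerm (n t l k : ℕ) : ℚ :=
  (-1) ^ k * ((2 * n - 2 * t).choose (k - t) : ℚ) * S k l * S (2 * n - k) l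

theorem psiTerm_two_mul_sub {n t l k : ℕ} (hk : k ∈ Finset.Icc t (2 * n - t)) :
    psiTerm n t l (2 * n - k) = psiTerm n t l k := by
  rw [Finset.mem_Icc] at hk
  have hchoose : (2 * n - 2 * t).choose (2 * n - k - t) = (2 * n - 2 * t).choose (k - t) := by
    rw [show 2 * n - k - t = 2 * n - 2 * t - (k - t) by omega, Nat.choose_symm (by omega)]
  unfold psiTerm
  rw [Nat.sub_sub_self (by omega), neg_one_pow_two_mul_sub (by omega), hchoose]
  ring

theorem sum_comp_two_mul_sub_mul_psiTerm (g : ℕ → ℚ) (n t l : ℕ) :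
    ∑ k ∈ Finset.Icc t (2 * n - t), g (2 * n - k) * psiTerm n t l k
      = ∑ k ∈ Finset.Icc t (2 * n - t), g k * psiTerm n t l k := by
  rw [← Finset.sum_Icc_reflect _ (2 * n) t]
  refine Finset.sum_congr rfl fun k hk => ?_
  rw [Nat.sub_sub_self (by simp only [Finset.mem_Icc] at hk; omega), psiTerm_two_mul_sub hk]

theorem ratio_mul_ratio_eq_mean {n l : ℕ} {x y : ℚ} (hx : 0 ≤ x) (hy : 0 ≤ y)
    (hxy : x + y = 2 * n) :
    ((n : ℚ) + l + 1) / (4 * (2 * l + 1))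
        * (2 * (2 * l + 1) / (x + l + 1) * (2 * (2 * l + 1) / (y + l + 1)))
      = ((2 * l + 1) / (x + l + 1) + (2 * l + 1) / (y + l + 1)) / 2 := by
  field_simp
  linear_combination (-4 : ℚ) * hxy

theorem psiTerm_succ {n t l k : ℕ} (hk : k ≤ 2 * n) :
    ((n : ℚ) + l + 1) / (4 * (2 * l + 1)) * psiTerm n t (l + 1) k
      = ((2 * l + 1) / (k + l + 1) + (2 * l + 1) / ((2 * n - k : ℕ) + l + 1)) / 2
          * psiTerm n t l k := by
  rw [← ratio_mul_ratio_eq_mean (n := n) (by positivity) (by positivity)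
    (by push_cast [Nat.cast_sub hk]; ring)]
  unfold psiTerm
  rw [S_succ_right, S_succ_right]
  ring

/-- Lemma 2 of the paper: R_t(2n,l) = ((n+l+1)/(4(2l+1))) Ψ_t(2n,l+1). -/
theorem R_eq_psi_succ (n l t : ℕ) :
    ∑ k ∈ Finset.Icc t (2 * n - t),
        (-1 : ℚ) ^ k * ((2 * (l : ℚ) + 1) / ((k : ℚ) + l + 1)) *
          ((2 * n - 2 * t).choose (k - t) : ℚ) * S k l * S (2 * n - k) l
      = (((n : ℚ) + l + 1) / (4 * (2 * (l : ℚ) + 1))) *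
          ∑ k ∈ Finset.Icc t (2 * n - t),
            (-1 : ℚ) ^ k * ((2 * n - 2 * t).choose (k - t) : ℚ) *
              S k (l + 1) * S (2 * n - k) (l + 1) := by
  set w : ℕ → ℚ := fun k => (2 * l + 1) / (k + l + 1)
  calc _ = ∑ k ∈ Finset.Icc t (2 * n - t), w k * psiTerm n t l k :=
        Finset.sum_congr rfl fun k _ => by unfold psiTerm; ring
    _ = ∑ k ∈ Finset.Icc t (2 * n - t), (w k + w (2 * n - k)) / 2 * psiTerm n t l k := by
        simp only [add_div, add_mul, Finset.sum_add_distrib, div_mul_eq_mul_div _ (2 : ℚ),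
          ← Finset.sum_div, sum_comp_two_mul_sub_mul_psiTerm, add_halves]
    _ = _ := by
        rw [Finset.mul_sum]
        refine Finset.sum_congr rfl fun k hk => ?_
        rw [← psiTerm]
        exact (psiTerm_succ (by simp only [Finset.mem_Icc] at hk; omega)).symm
end

section
/- For every positive integer n and non-negative integers l, t with t < n: ∑_{k=t}^{2n-t} (-1)^k · C(2n-2t, k-t) · S(k,l) · S(2n-k,l) = 4 · ∑_{k=t}^{2n-1-t} (-1)^k · (2l+1)/(k+l+1) · C(2n-1-2t, k-t) · S(k,l) · S(2n-1-k,l). -/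
/-!
Shift the summation index by `t` and put `m = 2n - 1 - 2t`, which is odd. Pascal's rule writes
the left side as `∑_{i+j=m} (-1)^i C(m,i) (S(t+i) S(t+j+1) - S(t+i+1) S(t+j))`. The recursion
`S(a+1) = 2(2a+1)/(a+l+1) · S(a)`, together with `(2a+1)/(a+l+1) = 2 - (2l+1)/(a+l+1)`, turns each
difference into `2(2l+1) (1/(t+i+l+1) - 1/(t+j+l+1)) S(t+i) S(t+j)`. As `m` is odd, exchanging `i`
and `j` flips the sign of an alternating binomial sum, so both halves contribute the same `2R`.
-/

open Finset

theorem Finset.sum_Icc_add_eq_sum_antidiagonal {M : Type*} [AddCommMonoid M] (f : ℕ → M) (t m : ℕ) :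
    ∑ k ∈ Icc t (t + m), f k = ∑ ij ∈ antidiagonal m, f (t + ij.1) := by
  rw [← Ico_add_one_right_eq_Icc, sum_Ico_eq_sum_range, Nat.sum_antidiagonal_eq_sum_range_succ_mk,
    show t + m + 1 - t = m + 1 by omega]

theorem Finset.sum_antidiagonal_neg_one_pow_choose_succ {R : Type*} [CommRing R]
    (f : ℕ → ℕ → R) (m : ℕ) :
    ∑ ij ∈ antidiagonal (m + 1), (-1) ^ ij.1 * ((m + 1).choose ij.1 : R) * f ij.1 ij.2 =
      ∑ ij ∈ antidiagonal m,
        (-1) ^ ij.1 * (m.choose ij.1 : R) * (f ij.1 (ij.2 + 1) - f (ij.1 + 1) ij.2) := by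
  simp_rw [mul_comm ((-1 : R) ^ _), mul_assoc]
  rw [sum_antidiagonal_choose_succ_mul (fun i j => (-1 : R) ^ i * f i j), ← sum_add_distrib]
  refine sum_congr rfl fun ij hij => ?_
  rw [Nat.choose_symm_of_eq_add (mem_antidiagonal.1 hij).symm]
  ring

theorem Finset.sum_antidiagonal_neg_one_pow_choose_swap_of_odd {R : Type*} [CommRing R]
    {m : ℕ} (hm : Odd m) (f : ℕ → ℕ → R) :
    ∑ ij ∈ antidiagonal m, (-1) ^ ij.1 * (m.choose ij.1 : R) * f ij.2 ij.1 =
      -∑ ij ∈ antidiagonal m, (-1) ^ ij.1 * (m.choose ij.1 : R) * f ij.1 ij.2 := by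
  rw [← Nat.sum_antidiagonal_swap, ← sum_neg_distrib]
  refine sum_congr rfl fun ij hij => ?_
  have hsum : ij.1 + ij.2 = m := mem_antidiagonal.1 hij
  have hsign : (-1 : R) ^ ij.2 = -(-1) ^ ij.1 := by
    have hprod : (-1 : R) ^ ij.1 * (-1) ^ ij.2 = -1 := by rw [← pow_add, hsum, hm.neg_one_pow]
    have hsq : (-1 : R) ^ ij.1 * (-1) ^ ij.1 = 1 := by rw [← mul_pow]; norm_num
    linear_combination (-1 : R) ^ ij.1 * hprod - (-1 : R) ^ ij.2 * hsq
  simp only [Prod.fst_swap, Prod.snd_swap, hsign, Nat.choose_symm_of_eq_add hsum.symm]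
  ring

theorem S_succ (a l : ℕ) : S (a + 1) l = 2 * (2 * a + 1) / (a + l + 1) * S a l := by
  have hfac : ∀ k : ℕ, ((k + 1).factorial : ℚ) = (k + 1) * k.factorial := fun k => by
    push_cast [Nat.factorial_succ]; ring
  simp only [S, show 2 * (a + 1) = 2 * a + 1 + 1 by ring, show a + 1 + l = a + l + 1 by ring, hfac]
  field_simp
  push_cast
  ring

theorem S_mul_S_succ_sub_S_succ_mul_S (a b l : ℕ) :
    S a l * S (b + 1) l - S (a + 1) l * S b l =
      2 * (2 * l + 1) * (1 / (a + l + 1) - 1 / (b + l + 1)) * (S a l * S b l) := by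
  rw [S_succ, S_succ]
  field_simp
  ring

theorem sum_antidiagonal_S_mul_S_of_odd (t l : ℕ) {m : ℕ} (hm : Odd m) :
    ∑ ij ∈ antidiagonal (m + 1),
        (-1 : ℚ) ^ ij.1 * ((m + 1).choose ij.1 : ℚ) * (S (t + ij.1) l * S (t + ij.2) l) =
      4 * ∑ ij ∈ antidiagonal m,
        (-1 : ℚ) ^ ij.1 * (m.choose ij.1 : ℚ) *
          ((2 * l + 1) / ((t + ij.1 : ℕ) + l + 1) * (S (t + ij.1) l * S (t + ij.2) l)) := by
  set f : ℕ → ℕ → ℚ := fun i j => (2 * l + 1) / ((t + i : ℕ) + l + 1) * (S (t + i) l * S (t + j) l)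
  have hterm : ∀ i j : ℕ, S (t + i) l * S (t + (j + 1)) l - S (t + (i + 1)) l * S (t + j) l =
      2 * f i j - 2 * f j i := fun i j => by
    rw [← add_assoc, ← add_assoc, S_mul_S_succ_sub_S_succ_mul_S]
    simp only [f]
    ring
  rw [sum_antidiagonal_neg_one_pow_choose_succ (fun i j => S (t + i) l * S (t + j) l)]
  simp only [hterm, mul_sub, ← mul_left_comm (2 : ℚ), sum_sub_distrib, ← mul_sum,
    sum_antidiagonal_neg_one_pow_choose_swap_of_odd hm f]
  ring

theorem psi_eq_four_R_general (n l t : ℕ) (ht : t < n) :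
    ∑ k ∈ Finset.Icc t (2 * n - t),
        (-1 : ℚ) ^ k * ((2 * n - 2 * t).choose (k - t) : ℚ) * S k l * S (2 * n - k) l
      = 4 * ∑ k ∈ Finset.Icc t (2 * n - 1 - t),
            (-1 : ℚ) ^ k * ((2 * (l : ℚ) + 1) / ((k : ℚ) + l + 1)) *
              ((2 * n - 1 - 2 * t).choose (k - t) : ℚ) * S k l * S (2 * n - 1 - k) l := by
  set m := 2 * n - 1 - 2 * t
  have hm : Odd m := ⟨n - t - 1, by omega⟩
  rw [show 2 * n - t = t + (m + 1) by omega, show 2 * n - 1 - t = t + m by omega,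
    sum_Icc_add_eq_sum_antidiagonal, sum_Icc_add_eq_sum_antidiagonal]
  have hpsi : ∑ ij ∈ antidiagonal (m + 1), (-1 : ℚ) ^ (t + ij.1) *
        ((2 * n - 2 * t).choose (t + ij.1 - t) : ℚ) * S (t + ij.1) l * S (2 * n - (t + ij.1)) l =
      (-1) ^ t * ∑ ij ∈ antidiagonal (m + 1),
        (-1 : ℚ) ^ ij.1 * ((m + 1).choose ij.1 : ℚ) * (S (t + ij.1) l * S (t + ij.2) l) := by
    rw [mul_sum]
    refine sum_congr rfl fun ij hij => ?_
    have hsum : ij.1 + ij.2 = m + 1 := mem_antidiagonal.1 hij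
    rw [show 2 * n - 2 * t = m + 1 by omega, Nat.add_sub_cancel_left,
      show 2 * n - (t + ij.1) = t + ij.2 by omega, pow_add]
    ring
  have hR : ∑ ij ∈ antidiagonal m, (-1 : ℚ) ^ (t + ij.1) *
        ((2 * (l : ℚ) + 1) / (((t + ij.1 : ℕ) : ℚ) + l + 1)) * (m.choose (t + ij.1 - t) : ℚ) *
          S (t + ij.1) l * S (2 * n - 1 - (t + ij.1)) l =
      (-1) ^ t * ∑ ij ∈ antidiagonal m, (-1 : ℚ) ^ ij.1 * (m.choose ij.1 : ℚ) *
        ((2 * l + 1) / ((t + ij.1 : ℕ) + l + 1) * (S (t + ij.1) l * S (t + ij.2) l)) := by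
    rw [mul_sum]
    refine sum_congr rfl fun ij hij => ?_
    have hsum : ij.1 + ij.2 = m := mem_antidiagonal.1 hij
    rw [Nat.add_sub_cancel_left, show 2 * n - 1 - (t + ij.1) = t + ij.2 by omega, pow_add]
    ring
  rw [hpsi, hR, sum_antidiagonal_S_mul_S_of_odd t l hm]
  ring

/-- Lemma 3 of the paper: Ψ_t(2n,l) = 4 R_t(2n-1,l). -/
theorem psi_eq_four_R (n l t : ℕ) (hn : 0 < n) (ht : t < n) :
    ∑ k ∈ Finset.Icc t (2 * n - t),
        (-1 : ℚ) ^ k * ((2 * n - 2 * t).choose (k - t) : ℚ) * S k l * S (2 * n - k) l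
      = 4 * ∑ k ∈ Finset.Icc t (2 * n - 1 - t),
            (-1 : ℚ) ^ k * ((2 * (l : ℚ) + 1) / ((k : ℚ) + l + 1)) *
              ((2 * n - 1 - 2 * t).choose (k - t) : ℚ) * S k l * S (2 * n - 1 - k) l :=
  psi_eq_four_R_general n l t ht
end
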